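/- arXiv:1007.3367 — 7 statements merged into one kernel-verified Lean document; each statement's English description precedes it below -/
import Mathlib

section
/- Let (X,τ,∂) be a Polish topometric space (τ Polish, the ∂-topology refines τ, and ∂ is τ-lower semi-continuous). If A ⊆ X is analytic and ε > 0, then the ε-enlargement (A)_ε = {x ∈ X : ∂(x,A) < ε} is analytic. -/
open MeasureTheory

/-- In a Polish topometric space `(X,τ,D)`, the `ε`-enlargement of an
analytic set is analytic. -/
theorem stmt_2 {X : Type*} [TopologicalSpace X] [PolishSpace X]
    (D : X → X → ℝ)
    (hD_eq : ∀ x y : X, D x y = 0 ↔ x = y)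
    (hD_symm : ∀ x y : X, D x y = D y x)
    (hD_tri : ∀ x y z : X, D x z ≤ D x y + D y z)
    (hD_ref : ∀ U : Set X, IsOpen U → ∀ x ∈ U, ∃ ε > (0 : ℝ), {y | D x y < ε} ⊆ U)
    (hD_lsc : ∀ r : ℝ, IsClosed {p : X × X | D p.1 p.2 ≤ r})
    (A : Set X) (hA : AnalyticSet A) (ε : ℝ) (hε : 0 < ε) :
    AnalyticSet {x : X | ∃ a ∈ A, D x a < ε} := by
  -- The set {p | D p.1 p.2 < ε} is a countable union of closed sets
  have hlt : AnalyticSet {p : X × X | D p.1 p.2 < ε} := by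
    have : {p : X × X | D p.1 p.2 < ε} = ⋃ n : ℕ, {p : X × X | D p.1 p.2 ≤ ε - 1 / (n + 1)} := by
      ext p
      simp only [Set.mem_setOf_eq, Set.mem_iUnion]
      constructor
      · intro h
        obtain ⟨n, hn⟩ := exists_nat_one_div_lt (sub_pos.2 h)
        exact ⟨n, by linarith⟩
      · rintro ⟨n, hn⟩
        have : (0:ℝ) < 1 / (n + 1) := by positivity
        linarith
    rw [this]
    exact AnalyticSet.iUnion fun n => (hD_lsc _).analyticSet
  have hA2 : AnalyticSet {p : X × X | p.2 ∈ A} := hA.preimage continuous_snd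
  have hS : AnalyticSet ({p : X × X | p.2 ∈ A} ∩ {p : X × X | D p.1 p.2 < ε}) := by
    have := AnalyticSet.iInter (ι := Bool)
      (s := fun b => if b then {p : X × X | p.2 ∈ A} else {p : X × X | D p.1 p.2 < ε})
      (fun b => by cases b <;> simpa)
    convert this using 1
    ext p
    simp [Set.mem_iInter, Bool.forall_bool, and_comm]
  have : {x : X | ∃ a ∈ A, D x a < ε}
      = Prod.fst '' ({p : X × X | p.2 ∈ A} ∩ {p : X × X | D p.1 p.2 < ε}) := by
    ext x
    simp only [Set.mem_setOf_eq, Set.mem_image, Set.mem_inter_iff, Prod.exists]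
    constructor
    · rintro ⟨a, ha, h⟩; exact ⟨x, a, ⟨ha, h⟩, rfl⟩
    · rintro ⟨x', a, ⟨ha, h⟩, rfl⟩; exact ⟨a, ha, h⟩
  rw [this]
  exact hS.image_of_continuous continuous_fst
end

section
/- Let a Polish group G act topometrically on a Polish topometric space X, and suppose that for every ε > 0 there exists x̄ ∈ X^n with (G·x̄)_ε comeagre in X^n. Then there exists x̄ ∈ X^n whose ∂-closure of G·x̄ is comeagre in X^n. -/
/-- The supremum metric on tuples induced by a metric `D`. -/
noncomputable def supMet {X : Type*} (D : X → X → ℝ) {n : ℕ} (x y : Fin n → X) : ℝ :=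
  ⨆ i : Fin n, D (x i) (y i)

/-- The orbit of a tuple under the diagonal action associated to `a : G → X → X`. -/
def orbitTup {G X : Type*} (a : G → X → X) {n : ℕ} (x : Fin n → X) : Set (Fin n → X) :=
  {y | ∃ g : G, ∀ i, a g (x i) = y i}

/-- The open `ε`-enlargement of a set of tuples with respect to the sup metric of `D`. -/
def encl {X : Type*} (D : X → X → ℝ) {n : ℕ} (ε : ℝ) (A : Set (Fin n → X)) :
    Set (Fin n → X) :=
  {x | ∃ y ∈ A, supMet D x y < ε}

/-- The closure of a set of tuples in the sup metric of `D`. -/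
def metCl {X : Type*} (D : X → X → ℝ) {n : ℕ} (A : Set (Fin n → X)) :
    Set (Fin n → X) :=
  {x | ∀ ε > (0 : ℝ), ∃ y ∈ A, supMet D x y < ε}

/-! Intersect the comeagre sets `(G·xₖ)_{1/(k+1)}`; by the Baire category theorem the
intersection `W` contains some `z`. Any `u ∈ W` is, like `z`, within `1/(k+1)` of a translate
of `xₖ`, so, the action being isometric, `u` is within `2/(k+1)` of a translate of `z` for
every `k`. Hence `W` lies in the metric closure of `G·z`. -/

open Filter Topology

section SupMet

variable {X : Type*} {D : X → X → ℝ} {n : ℕ}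

lemma le_supMet (x y : Fin n → X) (i : Fin n) : D (x i) (y i) ≤ supMet D x y :=
  le_ciSup (Set.finite_range fun j => D (x j) (y j)).bddAbove i

lemma supMet_comm (hD_symm : ∀ x y : X, D x y = D y x) (x y : Fin n → X) :
    supMet D x y = supMet D y x := by
  simp only [supMet, hD_symm]

lemma supMet_triangle (hD_tri : ∀ x y z : X, D x z ≤ D x y + D y z) (x y z : Fin n → X) :
    supMet D x z ≤ supMet D x y + supMet D y z := by
  rcases isEmpty_or_nonempty (Fin n) with hn | hn
  · simp [supMet]
  · exact ciSup_le fun i =>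
      (hD_tri _ (y i) _).trans (add_le_add (le_supMet x y i) (le_supMet y z i))

lemma supMet_act {G : Type*} (a : G → X → X)
    (ha_iso : ∀ g : G, ∀ x y : X, D (a g x) (a g y) = D x y) (g : G) (x y : Fin n → X) :
    supMet D (fun i => a g (x i)) (fun i => a g (y i)) = supMet D x y := by
  simp only [supMet, ha_iso]

lemma mem_metCl_of_tendsto {A : Set (Fin n → X)} {x : Fin n → X} {ε : ℕ → ℝ}
    (hε : Tendsto ε atTop (𝓝 0)) (hx : ∀ k, x ∈ encl D (ε k) A) : x ∈ metCl D A := by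
  intro δ hδ
  obtain ⟨k, hk⟩ := (hε.eventually (gt_mem_nhds hδ)).exists
  obtain ⟨y, hyA, hxy⟩ := hx k
  exact ⟨y, hyA, hxy.trans hk⟩

end SupMet

section Orbit

variable {G X : Type*} [Group G] {a : G → X → X} {D : X → X → ℝ} {n : ℕ}

lemma eq_act_mul_inv_of_act_eq
    (ha_mul : ∀ g h : G, ∀ x : X, a (g * h) x = a g (a h x)) {x y y' : Fin n → X}
    {g g' : G} (hy : ∀ i, a g (x i) = y i) (hy' : ∀ i, a g' (x i) = y' i) :
    y = fun i => a (g * g'⁻¹) (y' i) := by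
  funext i
  rw [← hy, ← hy', ← ha_mul, inv_mul_cancel_right]

lemma encl_orbitTup_subset_encl_orbitTup
    (hD_symm : ∀ x y : X, D x y = D y x) (hD_tri : ∀ x y z : X, D x z ≤ D x y + D y z)
    (ha_mul : ∀ g h : G, ∀ x : X, a (g * h) x = a g (a h x))
    (ha_iso : ∀ g : G, ∀ x y : X, D (a g x) (a g y) = D x y)
    {x z : Fin n → X} {η ε : ℝ} (hz : z ∈ encl D ε (orbitTup a x)) :
    encl D η (orbitTup a x) ⊆ encl D (η + ε) (orbitTup a z) := by
  rintro u ⟨y, ⟨g, hy⟩, hu⟩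
  obtain ⟨y', ⟨g', hy'⟩, hz⟩ := hz
  refine ⟨fun i => a (g * g'⁻¹) (z i), ⟨g * g'⁻¹, fun i => rfl⟩, ?_⟩
  calc supMet D u (fun i => a (g * g'⁻¹) (z i))
      ≤ supMet D u y + supMet D y (fun i => a (g * g'⁻¹) (z i)) := supMet_triangle hD_tri _ _ _
    _ = supMet D u y + supMet D z y' := by
      rw [eq_act_mul_inv_of_act_eq ha_mul hy hy', supMet_act a ha_iso,
        supMet_comm hD_symm y' z]
    _ < η + ε := add_lt_add hu hz

end Orbit

theorem stmt_5_general
    {G X : Type*} [Group G]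
    [TopologicalSpace X] [PolishSpace X]
    (D : X → X → ℝ)
    (hD_symm : ∀ x y : X, D x y = D y x)
    (hD_tri : ∀ x y z : X, D x z ≤ D x y + D y z)
    (a : G → X → X)
    (ha_mul : ∀ g h : G, ∀ x : X, a (g * h) x = a g (a h x))
    (ha_iso : ∀ g : G, ∀ x y : X, D (a g x) (a g y) = D x y)
    {n : ℕ}
    (h : ∀ ε > (0 : ℝ), ∃ x : Fin n → X,
      encl D ε (orbitTup a x) ∈ residual (Fin n → X)) :
    ∃ x : Fin n → X, metCl D (orbitTup a x) ∈ residual (Fin n → X) := by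
  set ε : ℕ → ℝ := fun k => 1 / ((k : ℝ) + 1)
  have hε : Tendsto ε atTop (𝓝 0) := tendsto_one_div_add_atTop_nhds_zero_nat
  choose x hx using fun k => h (ε k) Nat.one_div_pos_of_nat
  set W := ⋂ k, encl D (ε k) (orbitTup a (x k))
  have hW : W ∈ residual (Fin n → X) := countable_iInter_mem.2 hx
  have : Nonempty (Fin n → X) := ⟨(h 1 one_pos).choose⟩
  obtain ⟨z, hz⟩ := (dense_of_mem_residual hW).nonempty
  refine ⟨z, mem_of_superset hW fun u hu => mem_metCl_of_tendsto (by simpa using hε.add hε)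
    fun k => ?_⟩
  exact encl_orbitTup_subset_encl_orbitTup hD_symm hD_tri ha_mul ha_iso
    (Set.mem_iInter.1 hz k) (Set.mem_iInter.1 hu k)

/-- If for every `ε > 0` some tuple `x : Xⁿ` has `(G·x)_ε` comeagre in `Xⁿ`,
then some tuple has an orbit whose `D`-closure is comeagre in `Xⁿ`. -/
theorem stmt_5
    {G X : Type*} [Group G] [TopologicalSpace G] [IsTopologicalGroup G] [PolishSpace G]
    [TopologicalSpace X] [PolishSpace X]
    (D : X → X → ℝ)
    (hD_eq : ∀ x y : X, D x y = 0 ↔ x = y)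
    (hD_symm : ∀ x y : X, D x y = D y x)
    (hD_tri : ∀ x y z : X, D x z ≤ D x y + D y z)
    (hD_ref : ∀ U : Set X, IsOpen U → ∀ x ∈ U, ∃ ε > (0 : ℝ), {y | D x y < ε} ⊆ U)
    (hD_lsc : ∀ r : ℝ, IsClosed {p : X × X | D p.1 p.2 ≤ r})
    (a : G → X → X)
    (ha_one : ∀ x : X, a 1 x = x)
    (ha_mul : ∀ g h : G, ∀ x : X, a (g * h) x = a g (a h x))
    (ha_cont : Continuous fun p : G × X => a p.1 p.2)
    (ha_iso : ∀ g : G, ∀ x y : X, D (a g x) (a g y) = D x y)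
    {n : ℕ}
    (h : ∀ ε > (0 : ℝ), ∃ x : Fin n → X,
      encl D ε (orbitTup a x) ∈ residual (Fin n → X)) :
    ∃ x : Fin n → X, metCl D (orbitTup a x) ∈ residual (Fin n → X) :=
  stmt_5_general D hD_symm hD_tri a ha_mul ha_iso h
end

section
/- Let (G,τ,∂) be a Polish topometric group with the Steinhaus property (with some exponent k) and let H be a second-countable topological group. If φ : G → H is a group homomorphism that is continuous from (G,∂) to H, then φ is continuous from (G,τ) to H. -/
open Pointwise

/-- The open `ε`-enlargement of `A ⊆ G` with respect to the distance `D`. -/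
def enclG {G : Type*} (D : G → G → ℝ) (ε : ℝ) (A : Set G) : Set G :=
  {g | ∃ b ∈ A, D g b < ε}

/-- `A` is σ-syndetic: countably many left translates of `A` cover `G`. -/
def SigmaSyndetic {G : Type*} [Group G] (A : Set G) : Prop :=
  ∃ t : ℕ → G, (⋃ n : ℕ, t n • A) = Set.univ

/-- The sup metric on tuples induced by `D`. -/
noncomputable def supMetG {G : Type*} (D : G → G → ℝ) {n : ℕ} (x y : Fin n → G) : ℝ :=
  ⨆ i : Fin n, D (x i) (y i)

/-- `(G,τ,D)` is Steinhaus with exponent `k`: for every symmetric σ-syndetic `A` and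
`ε > 0`, the identity lies in the interior of `(A^k)_ε`. -/
def SteinhausWith {G : Type*} [Group G] [TopologicalSpace G] (D : G → G → ℝ)
    (k : ℕ) : Prop :=
  ∀ A : Set G, A⁻¹ = A → SigmaSyndetic A →
    ∀ ε > (0 : ℝ), (1 : G) ∈ interior (enclG D ε (A ^ k))

/-- The topometric group `(G,τ,D)` has ample generics: for every `n` and `ε > 0` some
tuple in `Gⁿ` has a diagonal conjugacy class whose `ε`-enlargement is comeagre. -/
def AmpleGenerics {G : Type*} [Group G] [TopologicalSpace G] (D : G → G → ℝ) : Prop :=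
  ∀ n : ℕ, ∀ ε > (0 : ℝ), ∃ g : Fin n → G,
    {f : Fin n → G | ∃ k : G, supMetG D f (fun i => k * g i * k⁻¹) < ε}
      ∈ residual (Fin n → G)

/-!
A Pettis-type argument. Given a neighbourhood `W` of `1` in `H`, pick a symmetric neighbourhood
`V` of `1` with `V ^ (2k+1) ⊆ W`. Since `H` is separable, countably many translates of `V` cover
`H`, and pulling them back makes `A = φ⁻¹ (V⁻¹ V)` a symmetric σ-syndetic subset of `G`. By the
Steinhaus property `(A ^ k)_ε` is a `τ`-neighbourhood of `1`, and `∂`-continuity of `φ` at `1`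
together with left invariance of `∂` maps it into `(V⁻¹ V) ^ k V⁻¹ ⊆ W`.
-/

open Set Filter Topology

theorem exists_mem_nhds_one_pow_subset {M : Type*} [Monoid M] [TopologicalSpace M]
    [ContinuousMul M] (n : ℕ) {W : Set M} (hW : W ∈ 𝓝 (1 : M)) :
    ∃ V ∈ 𝓝 (1 : M), V ^ n ⊆ W := by
  induction n generalizing W with
  | zero => exact ⟨univ, univ_mem, by simpa [pow_zero] using mem_of_mem_nhds hW⟩
  | succ n ih =>
    obtain ⟨U, hUo, hU1, hUW⟩ := exists_open_nhds_one_mul_subset hW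
    obtain ⟨V, hV, hVU⟩ := ih (hUo.mem_nhds hU1)
    refine ⟨V ∩ U, inter_mem hV (hUo.mem_nhds hU1), ?_⟩
    calc (V ∩ U) ^ (n + 1) = (V ∩ U) ^ n * (V ∩ U) := pow_succ _ _
      _ ⊆ U * U := mul_subset_mul
          (hVU.trans' (pow_subset_pow_left inter_subset_left)) inter_subset_right
      _ ⊆ W := hUW

theorem exists_symmetric_mem_nhds_one_pow_subset {G : Type*} [Group G] [TopologicalSpace G]
    [IsTopologicalGroup G] (n : ℕ) {W : Set G} (hW : W ∈ 𝓝 (1 : G)) :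
    ∃ V ∈ 𝓝 (1 : G), V⁻¹ = V ∧ V ^ n ⊆ W := by
  obtain ⟨V, hV, hVW⟩ := exists_mem_nhds_one_pow_subset n hW
  refine ⟨V ∩ V⁻¹, inter_mem hV (inv_mem_nhds_one G hV), ?_, ?_⟩
  · rw [inter_inv, inv_inv, inter_comm]
  · exact (pow_subset_pow_left inter_subset_left).trans hVW

theorem exists_iUnion_smul_eq_univ_of_mem_nhds_one {H : Type*} [Group H] [TopologicalSpace H]
    [IsTopologicalGroup H] [TopologicalSpace.SeparableSpace H] {V : Set H}
    (hV : V ∈ 𝓝 (1 : H)) : ∃ s : ℕ → H, ⋃ n, s n • V = univ := by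
  obtain ⟨s, hs⟩ := TopologicalSpace.exists_dense_seq H
  refine ⟨s, eq_univ_of_forall fun h => ?_⟩
  have hnhds : h • V⁻¹ ∈ 𝓝 h := smul_mem_nhds_self.2 (inv_mem_nhds_one H hV)
  obtain ⟨_, ⟨v, hv, hvx⟩, n, hn⟩ := mem_closure_iff_nhds.1 (hs h) _ hnhds
  refine mem_iUnion.2 ⟨n, v⁻¹, hv, ?_⟩
  simp [hn, ← hvx, smul_eq_mul]

/-- `V⁻¹ * V` absorbs the choice of a point of `G` over each translate `s n • V` meeting the
range of `φ`. -/
theorem sigmaSyndetic_preimage_inv_mul {G H : Type*} [Group G] [Group H] (φ : G →* H)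
    {V : Set H} {s : ℕ → H} (hs : ⋃ n, s n • V = univ) :
    SigmaSyndetic (φ ⁻¹' (V⁻¹ * V)) := by
  have hpick : ∀ n, ∃ t : G, ∀ g : G, φ g ∈ s n • V → φ t ∈ s n • V := fun n => by
    by_cases h : ∃ g : G, φ g ∈ s n • V
    · exact ⟨h.choose, fun _ _ => h.choose_spec⟩
    · exact ⟨1, fun g hg => (h ⟨g, hg⟩).elim⟩
  choose t ht using hpick
  refine ⟨t, eq_univ_of_forall fun g => ?_⟩
  obtain ⟨n, hn⟩ := mem_iUnion.1 (hs ▸ mem_univ (φ g))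
  obtain ⟨a, ha, hta⟩ := ht n g hn
  obtain ⟨c, hc, hgc⟩ := hn
  refine mem_iUnion.2 ⟨n, (t n)⁻¹ * g, ?_, by simp [smul_eq_mul]⟩
  have : φ ((t n)⁻¹ * g) = a⁻¹ * c := by
    simp only [map_mul, map_inv, ← hta, ← hgc, smul_eq_mul]
    group
  rw [mem_preimage, this]
  exact mul_mem_mul (inv_mem_inv.2 ha) hc

theorem enclG_subset_preimage_mul_inv {G H : Type*} [Group G] [Group H] {D : G → G → ℝ}
    (hD_left : ∀ g h k : G, D (k * g) (k * h) = D g h) (φ : G →* H) {ε : ℝ} {V S : Set H}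
    (hφ : ∀ h : G, D 1 h < ε → φ h ∈ V) {A : Set G} (hA : A ⊆ φ ⁻¹' S) :
    enclG D ε A ⊆ φ ⁻¹' (S * V⁻¹) := by
  rintro g ⟨b, hb, hgb⟩
  have hD : D 1 (g⁻¹ * b) < ε := by
    rwa [← hD_left g b g⁻¹, inv_mul_cancel] at hgb
  have hφg : φ g = φ b * (φ (g⁻¹ * b))⁻¹ := by
    rw [map_mul, map_inv]
    group
  rw [mem_preimage, hφg]
  exact mul_mem_mul (hA hb) (inv_mem_inv.2 (hφ _ hD))

theorem stmt_8_general
    {G : Type*} [Group G] [TopologicalSpace G] [IsTopologicalGroup G]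
    (D : G → G → ℝ)
    (hD_bi : ∀ g h k : G, D (k * g) (k * h) = D g h ∧ D (g * k) (h * k) = D g h)
    (hSt : ∃ k : ℕ, SteinhausWith D k)
    {H : Type*} [Group H] [TopologicalSpace H] [IsTopologicalGroup H]
    [SecondCountableTopology H]
    (φ : G →* H)
    (hφD : ∀ g : G, ∀ W ∈ nhds (φ g), ∃ ε > (0 : ℝ), ∀ h : G, D g h < ε → φ h ∈ W) :
    Continuous φ := by
  obtain ⟨k, hk⟩ := hSt
  refine continuous_of_continuousAt_one φ fun W hW => ?_
  rw [map_one] at hW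
  obtain ⟨V, hV, hVsymm, hVW⟩ := exists_symmetric_mem_nhds_one_pow_subset (2 * k + 1) hW
  obtain ⟨ε, hε, hφε⟩ := hφD 1 V (by rwa [map_one])
  obtain ⟨s, hs⟩ := exists_iUnion_smul_eq_univ_of_mem_nhds_one hV
  have hA_symm : (φ ⁻¹' (V⁻¹ * V))⁻¹ = φ ⁻¹' (V⁻¹ * V) := by
    ext g
    simp only [Set.mem_inv, mem_preimage, map_inv]
    rw [← Set.mem_inv, mul_inv_rev, inv_inv]
  have hA := hk _ hA_symm (sigmaSyndetic_preimage_inv_mul φ hs) ε hε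
  have hVk : (V⁻¹ * V) ^ k * V⁻¹ ⊆ W := by
    rwa [hVsymm, ← sq, ← pow_mul, ← pow_succ]
  have hsub : enclG D ε ((φ ⁻¹' (V⁻¹ * V)) ^ k) ⊆ φ ⁻¹' W :=
    (enclG_subset_preimage_mul_inv (fun g h k => (hD_bi g h k).1) φ hφε
      (preimage_pow_subset φ _ k)).trans (preimage_mono hVk)
  exact mem_interior_iff_mem_nhds.1 (interior_mono hsub hA)

/-- If a Polish topometric group `(G,τ,D)` has the Steinhaus property (with
some exponent `k`) and `H` is a second-countable topological group, then any group
homomorphism `φ : G → H` which is continuous from `(G,D)` to `H` is `τ`-continuous. -/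
theorem stmt_8
    {G : Type*} [Group G] [TopologicalSpace G] [IsTopologicalGroup G] [PolishSpace G]
    (D : G → G → ℝ)
    (hD_eq : ∀ g h : G, D g h = 0 ↔ g = h)
    (hD_symm : ∀ g h : G, D g h = D h g)
    (hD_tri : ∀ g h k : G, D g k ≤ D g h + D h k)
    (hD_bi : ∀ g h k : G, D (k * g) (k * h) = D g h ∧ D (g * k) (h * k) = D g h)
    (hD_ref : ∀ U : Set G, IsOpen U → ∀ g ∈ U, ∃ ε > (0 : ℝ), {h | D g h < ε} ⊆ U)
    (hD_lsc : ∀ r : ℝ, IsClosed {p : G × G | D p.1 p.2 ≤ r})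
    (hSt : ∃ k : ℕ, SteinhausWith D k)
    {H : Type*} [Group H] [TopologicalSpace H] [IsTopologicalGroup H]
    [SecondCountableTopology H]
    (φ : G →* H)
    (hφD : ∀ g : G, ∀ W ∈ nhds (φ g), ∃ ε > (0 : ℝ), ∀ h : G, D g h < ε → φ h ∈ W) :
    Continuous φ :=
  stmt_8_general D hD_bi hSt φ hφD
end

section
/- If (G,τ,∂) is a Polish topometric group with the Steinhaus property, and τ' is another Polish group topology on G such that (G,τ',∂) is also a Polish topometric group, then τ = τ'. -/
open Pointwise

/-!
The Steinhaus property of `τ` makes `τ` finer than `τ'`: given a `τ'`-neighbourhood `U` of `1`,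
choose a symmetric `τ'`-open `V ∋ 1` with `V ^ (k + 1) ⊆ U`. It is σ-syndetic because `τ'` is
separable, and left invariance of `D` gives `(V ^ k)_ε ⊆ V ^ (k + 1)` as soon as the `ε`-ball
about `1` lies in `V`; so `U` is a `τ`-neighbourhood of `1`.

Comparable Polish group topologies coincide: they have the same Borel sets (Lusin–Souslin), so a
symmetric `τ`-open `V ∋ 1` is `τ'`-Baire measurable and, being σ-syndetic, `τ'`-non-meagre;
Pettis' theorem then makes `V * V⁻¹` a `τ'`-neighbourhood of `1`.
-/

open Topology Filter Set

theorem enclG_pow_subset_pow_succ {G : Type*} [Group G] {D : G → G → ℝ}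
    (hD_left : ∀ g h k : G, D (k * g) (k * h) = D g h) {V : Set G} (hV : V⁻¹ = V) {ε : ℝ}
    (hball : {h | D 1 h < ε} ⊆ V) (k : ℕ) : enclG D ε (V ^ k) ⊆ V ^ (k + 1) := by
  rintro g ⟨b, hb, hgb⟩
  have hdist : D 1 (g⁻¹ * b) = D g b := by rw [← hD_left g b g⁻¹, inv_mul_cancel]
  have hgb' : g⁻¹ * b ∈ V := hball (show D 1 (g⁻¹ * b) < ε by rwa [hdist])
  have hbg : b⁻¹ * g ∈ V := by
    rw [← hV, Set.mem_inv, mul_inv_rev, inv_inv]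
    exact hgb'
  rw [pow_succ]
  exact ⟨b, hb, b⁻¹ * g, hbg, mul_inv_cancel_left b g⟩

theorem isMeagre_congr {X : Type*} [TopologicalSpace X] {s t : Set X} (h : s =ᵇ t) :
    IsMeagre s ↔ IsMeagre t :=
  eventually_congr <| h.mono fun _ hx => (Iff.of_eq hx).not

section TopologicalGroup

variable {G : Type*} [Group G] [TopologicalSpace G] [IsTopologicalGroup G]

theorem exists_mem_nhds_one_pow_subset_s12 (n : ℕ) {U : Set G} (hU : U ∈ 𝓝 (1 : G)) :
    ∃ V ∈ 𝓝 (1 : G), V ^ n ⊆ U := by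
  induction n generalizing U with
  | zero => exact ⟨univ, univ_mem, by simpa using mem_of_mem_nhds hU⟩
  | succ n ih =>
    obtain ⟨W, hWo, hW1, hWU⟩ := exists_open_nhds_one_mul_subset hU
    obtain ⟨V, hV, hVW⟩ := ih (hWo.mem_nhds hW1)
    refine ⟨V ∩ W, inter_mem hV (hWo.mem_nhds hW1), ?_⟩
    calc (V ∩ W) ^ (n + 1) = (V ∩ W) ^ n * (V ∩ W) := pow_succ _ _
      _ ⊆ W * W := mul_subset_mul ((pow_subset_pow_left inter_subset_left).trans hVW)
          inter_subset_right
      _ ⊆ U := hWU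

theorem exists_isOpen_inv_eq_pow_subset (n : ℕ) {U : Set G} (hU : U ∈ 𝓝 (1 : G)) :
    ∃ V : Set G, IsOpen V ∧ (1 : G) ∈ V ∧ V⁻¹ = V ∧ V ^ n ⊆ U := by
  obtain ⟨W, hW, hWU⟩ := exists_mem_nhds_one_pow_subset_s12 n hU
  have h1 : (1 : G) ∈ interior W := mem_interior_iff_mem_nhds.2 hW
  refine ⟨interior W ∩ (interior W)⁻¹, isOpen_interior.inter isOpen_interior.inv,
    ⟨h1, by simpa using h1⟩, by simp [inter_comm], ?_⟩
  exact (pow_subset_pow_left (inter_subset_left.trans interior_subset)).trans hWU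

theorem sigmaSyndetic_of_mem_nhds_one [TopologicalSpace.SeparableSpace G] {V : Set G}
    (hV : V ∈ 𝓝 (1 : G)) : SigmaSyndetic V := by
  obtain ⟨t, ht⟩ := TopologicalSpace.exists_dense_seq G
  refine ⟨t, eq_univ_of_forall fun g => mem_iUnion.2 ?_⟩
  have hopen : IsOpen ((fun x : G => x⁻¹ * g) ⁻¹' interior V) :=
    isOpen_interior.preimage (by fun_prop)
  obtain ⟨n, hn⟩ := ht.exists_mem_open hopen ⟨g, by simpa using mem_interior_iff_mem_nhds.2 hV⟩
  exact ⟨n, mem_smul_set_iff_inv_smul_mem.2 (interior_subset hn)⟩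

theorem SigmaSyndetic.not_isMeagre [BaireSpace G] {V : Set G} (h : SigmaSyndetic V) :
    ¬ IsMeagre V := by
  obtain ⟨t, ht⟩ := h
  intro hV
  refine not_isMeagre_of_isOpen isOpen_univ univ_nonempty (ht ▸ isMeagre_iUnion fun n => ?_)
  rw [← preimage_smul_inv]
  exact hV.preimage_of_isOpenMap (continuous_const_smul _) (Homeomorph.smul _).isOpenMap

theorem BaireMeasurableSet.mul_inv_mem_nhds_one [BaireSpace G] {A : Set G}
    (hA : BaireMeasurableSet A) (hA' : ¬ IsMeagre A) : A * A⁻¹ ∈ 𝓝 (1 : G) := by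
  obtain ⟨U, hUo, hAU⟩ := hA.residualEq_isOpen
  obtain ⟨u₀, hu₀⟩ := nonempty_of_not_isMeagre ((isMeagre_congr hAU).not.1 hA')
  have h1 : (1 : G) ∈ U * U⁻¹ := by
    simpa using mul_mem_mul hu₀ (inv_mem_inv.2 hu₀)
  refine mem_of_superset (hUo.mul_right.mem_nhds h1) ?_
  rintro _ ⟨u, hu, v, hv, rfl⟩
  set g := u * v
  have hgAU : (g * ·) ⁻¹' A =ᵇ (g * ·) ⁻¹' U := hAU.filter_mono <|
    tendsto_residual_of_isOpenMap (continuous_const_mul g) (Homeomorph.mulLeft g).isOpenMap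
  have hS : ¬ IsMeagre (U ∩ (g * ·) ⁻¹' U) :=
    not_isMeagre_of_isOpen (hUo.inter (hUo.preimage (continuous_const_mul g)))
      ⟨v⁻¹, hv, by simpa [g, mul_assoc] using hu⟩
  -- `g = (g * x) * x⁻¹` for `x` in `A ∩ g⁻¹A`, residually equal to the open set `U ∩ g⁻¹U ∋ v⁻¹`
  obtain ⟨x, hxA, hgxA⟩ :=
    nonempty_of_not_isMeagre ((isMeagre_congr (hAU.inter hgAU)).not.2 hS)
  have hmem : g * x * x⁻¹ ∈ A * A⁻¹ := mul_mem_mul hgxA (inv_mem_inv.2 hxA)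
  rwa [mul_inv_cancel_right] at hmem

end TopologicalGroup

theorem nhds_one_le_of_steinhausWith {G : Type*} [Group G] (τ : TopologicalSpace G)
    [TopologicalSpace G] [IsTopologicalGroup G] [TopologicalSpace.SeparableSpace G]
    {D : G → G → ℝ} (hD_left : ∀ g h k : G, D (k * g) (k * h) = D g h)
    (hD_ref : ∀ U : Set G, IsOpen U → ∀ g ∈ U, ∃ ε > (0 : ℝ), {h | D g h < ε} ⊆ U)
    {k : ℕ} (hSt : @SteinhausWith G _ τ D k) : @nhds G τ 1 ≤ 𝓝 1 := by
  intro U hU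
  obtain ⟨V, hVo, hV1, hVinv, hVU⟩ := exists_isOpen_inv_eq_pow_subset (k + 1) hU
  obtain ⟨ε, hε, hball⟩ := hD_ref V hVo 1 hV1
  have hint := hSt V hVinv (sigmaSyndetic_of_mem_nhds_one (hVo.mem_nhds hV1)) ε hε
  exact mem_of_superset (@mem_interior_iff_mem_nhds G τ _ _ |>.1 hint)
    ((enclG_pow_subset_pow_succ hD_left hVinv hball k).trans hVU)

theorem IsTopologicalGroup.le_of_nhds_one_le {G : Type*} [Group G]
    {τ τ' : TopologicalSpace G} (hTG : @IsTopologicalGroup G τ _)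
    (hmul' : @ContinuousMul G τ' _) (h : @nhds G τ 1 ≤ @nhds G τ' 1) : τ ≤ τ' :=
  continuous_id_iff_le.1 <|
    @continuous_of_continuousAt_one G τ _ hTG G (G →* G) _ τ' hmul' _ _ (MonoidHom.id G) h

theorem IsTopologicalGroup.eq_of_le_of_polishSpace {G : Type*} [Group G]
    {τ τ' : TopologicalSpace G} (hTG : @IsTopologicalGroup G τ _) (hPol : @PolishSpace G τ)
    (hTG' : @IsTopologicalGroup G τ' _) (hPol' : @PolishSpace G τ') (hle : τ ≤ τ') :
    τ = τ' := by
  refine hTG.ext hTG' (le_antisymm (nhds_mono hle) fun U hU => ?_)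
  obtain ⟨V, hVo, hV1, hVinv, hVU⟩ := @exists_isOpen_inv_eq_pow_subset G _ τ hTG 2 U hU
  have hV : SigmaSyndetic V := by
    let _ := τ
    exact sigmaSyndetic_of_mem_nhds_one (hVo.mem_nhds hV1)
  let _ := τ'
  borelize G
  have hVm : MeasurableSet V := by
    rw [‹BorelSpace G›.measurable_eq, ← MeasureTheory.borel_eq_borel_of_le hPol hPol' hle]
    exact MeasurableSpace.measurableSet_generateFrom hVo
  refine mem_of_superset (hVm.baireMeasurableSet.mul_inv_mem_nhds_one hV.not_isMeagre) ?_
  rwa [hVinv, ← sq]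

theorem stmt_12_general {G : Type*} [Group G] (τ τ' : TopologicalSpace G)
    (hTG : @IsTopologicalGroup G τ _) (hPol : @PolishSpace G τ)
    (hTG' : @IsTopologicalGroup G τ' _) (hPol' : @PolishSpace G τ')
    (D : G → G → ℝ)
    (hD_bi : ∀ g h k : G, D (k * g) (k * h) = D g h ∧ D (g * k) (h * k) = D g h)
    (hD_ref' : ∀ U : Set G, @IsOpen G τ' U → ∀ g ∈ U, ∃ ε > (0 : ℝ), {h | D g h < ε} ⊆ U)
    (hSt : ∃ k : ℕ, @SteinhausWith G _ τ D k) :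
    τ = τ' := by
  obtain ⟨k, hSt⟩ := hSt
  have hnhds : @nhds G τ 1 ≤ @nhds G τ' 1 :=
    @nhds_one_le_of_steinhausWith G _ τ τ' hTG' (by let _ := τ'; infer_instance) D
      (fun g h k => (hD_bi g h k).1) hD_ref' k hSt
  exact hTG.eq_of_le_of_polishSpace hPol hTG' hPol'
    (hTG.le_of_nhds_one_le hTG'.toContinuousMul hnhds)

/-- If `(G,τ,D)` is a Polish topometric group with the Steinhaus property
and `τ'` is another Polish group topology making `(G,τ',D)` a Polish topometric group,
then `τ = τ'`. -/
theorem stmt_12 {G : Type*} [Group G] (τ τ' : TopologicalSpace G)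
    (hTG : @IsTopologicalGroup G τ _) (hPol : @PolishSpace G τ)
    (hTG' : @IsTopologicalGroup G τ' _) (hPol' : @PolishSpace G τ')
    (D : G → G → ℝ)
    (hD_eq : ∀ g h : G, D g h = 0 ↔ g = h)
    (hD_symm : ∀ g h : G, D g h = D h g)
    (hD_tri : ∀ g h k : G, D g k ≤ D g h + D h k)
    (hD_bi : ∀ g h k : G, D (k * g) (k * h) = D g h ∧ D (g * k) (h * k) = D g h)
    (hD_ref : ∀ U : Set G, @IsOpen G τ U → ∀ g ∈ U, ∃ ε > (0 : ℝ), {h | D g h < ε} ⊆ U)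
    (hD_lsc : ∀ r : ℝ,
      @IsClosed (G × G) (@instTopologicalSpaceProd G G τ τ) {p : G × G | D p.1 p.2 ≤ r})
    (hD_ref' : ∀ U : Set G, @IsOpen G τ' U → ∀ g ∈ U, ∃ ε > (0 : ℝ), {h | D g h < ε} ⊆ U)
    (hD_lsc' : ∀ r : ℝ,
      @IsClosed (G × G) (@instTopologicalSpaceProd G G τ' τ') {p : G × G | D p.1 p.2 ≤ r})
    (hSt : ∃ k : ℕ, @SteinhausWith G _ τ D k) :
    τ = τ' :=
  stmt_12_general τ τ' hTG hPol hTG' hPol' D hD_bi hD_ref' hSt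
end

section
/- Let G be a group with a bi-invariant distance ∂. Then (G,∂) has the metric Bergman property if and only if every left-invariant pseudo-metric d on G, for which some ∂-ball {g : ∂(g,1) < ε} is d-bounded, is bounded on all of G. -/
open Pointwise

/-- `G` has the Bergman property. -/
def Bergman (G : Type*) [Group G] : Prop :=
  ∀ W : ℕ → Set G, (∀ n, W n ⊆ W (n + 1)) → (⋃ n : ℕ, W n) = Set.univ →
    ∃ n k : ℕ, (W n) ^ k = Set.univ

/-- `(G,D)` has the metric Bergman property. -/
def MetricBergman {G : Type*} [Group G] (D : G → G → ℝ) : Prop :=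
  ∀ W : ℕ → Set G, (∀ n, W n ⊆ W (n + 1)) → (⋃ n : ℕ, W n) = Set.univ →
    ∀ ε > (0 : ℝ), ∃ n k : ℕ, (enclG D ε (W n)) ^ k = Set.univ

/-- `(G,D)` is metrically `k`-Bergman. -/
def MetricKBergman {G : Type*} [Group G] (D : G → G → ℝ) (k : ℕ) : Prop :=
  ∀ W : ℕ → Set G, (∀ n, W n ⊆ W (n + 1)) → (⋃ n : ℕ, W n) = Set.univ →
    ∀ ε > (0 : ℝ), ∃ n : ℕ, (enclG D ε (W n)) ^ k = Set.univ

/-- monotone sequences of sets: `W m ⊆ W n` for `m ≤ n`. -/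
lemma W_mono {G : Type*} (W : ℕ → Set G) (hW : ∀ n, W n ⊆ W (n + 1)) :
    ∀ {m n : ℕ}, m ≤ n → W m ⊆ W n := by
  intro m n hmn
  induction hmn with
  | refl => exact subset_rfl
  | step h ih => exact ih.trans (hW _)

/-- `(G,D)` has the metric Bergman property iff every left-invariant
pseudo-metric `d` on `G` for which some `D`-ball around `1` is `d`-bounded is bounded
on all of `G`. -/
theorem stmt_13
    {G : Type*} [Group G]
    (D : G → G → ℝ)
    (hD_eq : ∀ g h : G, D g h = 0 ↔ g = h)
    (hD_symm : ∀ g h : G, D g h = D h g)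
    (hD_tri : ∀ g h k : G, D g k ≤ D g h + D h k)
    (hD_bi : ∀ g h k : G, D (k * g) (k * h) = D g h ∧ D (g * k) (h * k) = D g h)
    : MetricBergman D ↔
      ∀ d : G → G → ℝ,
        (∀ g : G, d g g = 0) →
        (∀ g h : G, d g h = d h g) →
        (∀ g h k : G, d g k ≤ d g h + d h k) →
        (∀ k g h : G, d (k * g) (k * h) = d g h) →
        (∃ ε > (0 : ℝ), ∃ M : ℝ, ∀ g h : G, D g 1 < ε → D h 1 < ε → d g h ≤ M) →
        ∃ M : ℝ, ∀ g h : G, d g h ≤ M := by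
  have hD11 : D (1 : G) 1 = 0 := (hD_eq 1 1).2 rfl
  constructor
  · -- forward direction
    intro hMB d hd0 hdsymm hdtri hdinv ⟨ε, hε, M, hball⟩
    set W : ℕ → Set G := fun n => {g | d 1 g ≤ n} with hWdef
    have hWinc : ∀ n, W n ⊆ W (n + 1) := by
      intro n g hg
      simp only [hWdef, Set.mem_setOf_eq] at hg ⊢
      push_cast
      linarith
    have hWcov : (⋃ n : ℕ, W n) = Set.univ := by
      apply Set.eq_univ_of_forall
      intro g
      obtain ⟨n, hn⟩ := exists_nat_ge (d 1 g)
      exact Set.mem_iUnion.2 ⟨n, hn⟩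
    obtain ⟨n, k, hnk⟩ := hMB W hWinc hWcov ε hε
    -- every element of enclG D ε (W n) is at d-distance ≤ n + M from 1
    have hA : ∀ x ∈ enclG D ε (W n), d 1 x ≤ n + M := by
      rintro x ⟨b, hb, hxb⟩
      have h1 : d 1 x ≤ d 1 b + d b x := hdtri 1 b x
      have h2 : d b x = d 1 (b⁻¹ * x) := by
        have := hdinv b 1 (b⁻¹ * x)
        simpa using this
      have h3 : D (b⁻¹ * x) 1 < ε := by
        have := (hD_bi (b⁻¹ * x) 1 b).1
        simp only [mul_inv_cancel_left, mul_one] at this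
        exact this ▸ hxb
      have h4 : d (b⁻¹ * x) 1 ≤ M := hball _ _ h3 (by rw [hD11]; exact hε)
      have h5 : d 1 (b⁻¹ * x) ≤ M := by rw [hdsymm]; exact h4
      have hbn : d 1 b ≤ n := hb
      linarith
    set C : ℝ := max (n + M) 0 with hC
    have hCnn : 0 ≤ C := le_max_right _ _
    have hApow : ∀ m : ℕ, ∀ x ∈ (enclG D ε (W n)) ^ m, d 1 x ≤ m * C := by
      intro m
      induction m with
      | zero =>
        intro x hx
        simp only [pow_zero, Set.mem_one] at hx
        subst hx
        simp [hd0]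
      | succ m ih =>
        intro x hx
        rw [pow_succ] at hx
        obtain ⟨y, hy, a, ha, rfl⟩ := hx
        have h1 : d 1 (y * a) ≤ d 1 y + d y (y * a) := hdtri _ _ _
        have h2 : d y (y * a) = d 1 a := by
          have := hdinv y 1 a
          simpa using this
        have h3 : d 1 a ≤ C := le_trans (hA a ha) (le_max_left _ _)
        have h4 : d 1 y ≤ m * C := ih y hy
        push_cast
        nlinarith
    refine ⟨2 * (k * C), fun g h => ?_⟩
    have hg : d 1 g ≤ k * C := hApow k g (hnk ▸ Set.mem_univ g)
    have hh : d 1 h ≤ k * C := hApow k h (hnk ▸ Set.mem_univ h)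
    have : d g h ≤ d g 1 + d 1 h := hdtri _ _ _
    have hg1 : d g 1 = d 1 g := hdsymm _ _
    linarith
  · -- backward direction
    intro H W hWinc hWcov ε hε
    obtain ⟨m0, hm0⟩ : ∃ m0, (1 : G) ∈ W m0 := by
      have := hWcov ▸ Set.mem_univ (1 : G)
      exact Set.mem_iUnion.1 (hWcov.symm ▸ Set.mem_univ (1 : G))
    set A : ℕ → Set G := fun n => enclG D ε (W (n + m0)) with hAdef
    have h1A : ∀ n, (1 : G) ∈ A n := by
      intro n
      exact ⟨1, W_mono W hWinc (Nat.le_add_left m0 n) hm0, by rw [hD11]; exact hε⟩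
    have hAmono : ∀ {m n : ℕ}, m ≤ n → A m ⊆ A n := by
      intro m n hmn x ⟨b, hb, hxb⟩
      exact ⟨b, W_mono W hWinc (by omega) hb, hxb⟩
    -- the "norm" sets
    set S : G → Set ℕ := fun g => {m | g ∈ A m ^ m} with hSdef
    have hSne : ∀ g, (S g).Nonempty := by
      intro g
      obtain ⟨m, hm⟩ := Set.mem_iUnion.1 (hWcov.symm ▸ Set.mem_univ g)
      refine ⟨max (m + 1) 1, ?_⟩
      have hg : g ∈ A (max (m + 1) 1) := by
        refine ⟨g, W_mono W hWinc (by omega) hm, by rw [(hD_eq g g).2 rfl]; exact hε⟩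
      have : A (max (m + 1) 1) ^ 1 ⊆ A (max (m + 1) 1) ^ max (m + 1) 1 :=
        Set.pow_subset_pow_right (h1A _) (le_max_right _ _)
      exact this (by simpa using hg)
    set ρ : G → ℕ := fun g => sInf (S g) with hρdef
    have hρ_mem : ∀ g, g ∈ A (ρ g) ^ (ρ g) := fun g => Nat.sInf_mem (hSne g)
    have hρ_le : ∀ g m, g ∈ A m ^ m → ρ g ≤ m := fun g m hm => Nat.sInf_le hm
    have hρ1 : ρ (1 : G) = 0 := by
      have h0 : (1 : G) ∈ A 0 ^ 0 := by simp
      exact Nat.le_zero.1 (hρ_le 1 0 h0)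
    have hρtri : ∀ g h : G, ρ (g * h) ≤ ρ g + ρ h := by
      intro g h
      apply hρ_le
      have hg : g ∈ A (ρ g + ρ h) ^ (ρ g) :=
        Set.pow_subset_pow_left (hAmono (Nat.le_add_right _ _)) (hρ_mem g)
      have hh : h ∈ A (ρ g + ρ h) ^ (ρ h) :=
        Set.pow_subset_pow_left (hAmono (Nat.le_add_left _ _)) (hρ_mem h)
      rw [pow_add]
      exact Set.mul_mem_mul hg hh
    set d : G → G → ℝ := fun g h => (ρ (g⁻¹ * h) : ℝ) + (ρ (h⁻¹ * g) : ℝ) with hddef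
    have hd0 : ∀ g : G, d g g = 0 := by
      intro g; simp [hddef, hρ1]
    have hdsymm : ∀ g h : G, d g h = d h g := by
      intro g h; simp [hddef]; ring
    have hdtri : ∀ g h k : G, d g k ≤ d g h + d h k := by
      intro g h k
      have h1 : ρ (g⁻¹ * k) ≤ ρ (g⁻¹ * h) + ρ (h⁻¹ * k) := by
        have : g⁻¹ * k = (g⁻¹ * h) * (h⁻¹ * k) := by group
        rw [this]; exact hρtri _ _
      have h2 : ρ (k⁻¹ * g) ≤ ρ (k⁻¹ * h) + ρ (h⁻¹ * g) := by
        have : k⁻¹ * g = (k⁻¹ * h) * (h⁻¹ * g) := by group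
        rw [this]; exact hρtri _ _
      simp only [hddef]
      have c1 : (ρ (g⁻¹ * k) : ℝ) ≤ (ρ (g⁻¹ * h) : ℝ) + (ρ (h⁻¹ * k) : ℝ) := by
        exact_mod_cast h1
      have c2 : (ρ (k⁻¹ * g) : ℝ) ≤ (ρ (k⁻¹ * h) : ℝ) + (ρ (h⁻¹ * g) : ℝ) := by
        exact_mod_cast h2
      linarith
    have hdinv : ∀ k g h : G, d (k * g) (k * h) = d g h := by
      intro k g h
      simp only [hddef, mul_inv_rev]
      congr 2 <;> group
    have hdball : ∃ ε' > (0 : ℝ), ∃ M : ℝ, ∀ g h : G, D g 1 < ε' → D h 1 < ε' → d g h ≤ M := by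
      refine ⟨ε / 2, by linarith, 2, fun g h hg hh => ?_⟩
      have key : ∀ x y : G, D x 1 < ε / 2 → D y 1 < ε / 2 → ρ (x⁻¹ * y) ≤ 1 := by
        intro x y hx hy
        have hD1 : D y x = D (x⁻¹ * y) 1 := by
          have := (hD_bi (x⁻¹ * y) 1 x).1
          simpa using this
        have hDlt : D (x⁻¹ * y) 1 < ε := by
          rw [← hD1]
          calc D y x ≤ D y 1 + D 1 x := hD_tri _ _ _
            _ < ε / 2 + ε / 2 := by
                have : D 1 x = D x 1 := hD_symm _ _
                linarith
            _ = ε := by ring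
        apply hρ_le
        have hmem : x⁻¹ * y ∈ A 1 :=
          ⟨1, W_mono W hWinc (Nat.le_add_left m0 1) hm0, hDlt⟩
        simpa using hmem
      have h1 := key g h hg hh
      have h2 := key h g hh hg
      simp only [hddef]
      have c1 : (ρ (g⁻¹ * h) : ℝ) ≤ 1 := by exact_mod_cast h1
      have c2 : (ρ (h⁻¹ * g) : ℝ) ≤ 1 := by exact_mod_cast h2
      linarith
    obtain ⟨M, hM⟩ := H d hd0 hdsymm hdtri hdinv hdball
    set N : ℕ := ⌈M⌉₊ with hN
    refine ⟨N + m0, N, ?_⟩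
    apply Set.eq_univ_of_forall
    intro g
    have hρg : (ρ g : ℝ) ≤ M := by
      have := hM 1 g
      simp only [hddef, inv_one, one_mul, mul_one] at this
      have hnn : (0 : ℝ) ≤ (ρ (g⁻¹) : ℝ) := Nat.cast_nonneg _
      linarith
    have hρgN : ρ g ≤ N := by
      have : (ρ g : ℝ) ≤ (N : ℝ) := le_trans hρg (Nat.le_ceil M)
      exact_mod_cast this
    have : g ∈ A N ^ N :=
      Set.pow_subset_pow (hAmono hρgN) (h1A N) hρgN (hρ_mem g)
    exact this
end

section
/- Let (X,τ_X,∂_X) be a Polish topometric space, (Y,τ_Y) a Polish space, and f : Y → X a continuous map with τ_X-dense image such that (fU)_ε is τ_X-open for every open U ⊆ Y and ε > 0, and (V)_ε is open for every open V ⊆ X and ε > 0. Then for every comeagre A ⊆ Y, the ∂_X-closure of f(A) is comeagre in X. -/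
/-!
Fix `r > 0` and write the comeagre set `A ⊇ ⋂ₙ Uₙ` with `Uₙ` open and dense. Build a countably
branching tree of pairs `(W, V)` of open sets with `W ⊆ (f V)_r`: a child of `(W, V)` at level `n`
shrinks `W` into a basic open set and `V` to a ball of diameter `≤ 2⁻ⁿ` with closure in `V ∩ Uₙ`.
Openness of the enlargements `(f V)_r` and `(O)_s`, with continuity of `f`, makes the children's
`W`s open and dense in the parent's `W`, so comeagre many `x` lie on an infinite branch. Along
it the `V`s shrink to a point `y ∈ ⋂ₙ Uₙ`, and lower semicontinuity of `D` gives `D x (f y) ≤ r`. The root `(X, Y)` is not of the form `W ⊆ (f V)_r`; the invariant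
actually carried is that `W` lies in the closure of `(f (V ∩ u))_r` for every open dense `u`,
which at the root is density of `f`.
-/

open Set Filter Topology Metric TopologicalSpace

section Residual

variable {X : Type*} [TopologicalSpace X]

theorem eventually_residual_mem_of_subset_closure {ι : Type*} [Countable ι] {S C : ι → Set X}
    (hC : ∀ i, IsOpen (C i)) (hSC : ∀ i, S i ⊆ closure (C i)) :
    ∀ᶠ x in residual X, ∀ i, x ∈ S i → x ∈ C i := by
  refine eventually_countable_forall.mpr fun i => ?_
  have hnd : IsNowhereDense (frontier (C i)) := by
    rw [isClosed_frontier.isNowhereDense_iff, ← frontier_compl]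
    exact interior_frontier (hC i).isClosed_compl
  filter_upwards [hnd.isMeagre] with x hx hxS
  by_contra hxC
  exact hx ⟨hSC i hxS, by rwa [(hC i).interior_eq]⟩

theorem eventually_residual_exists_branch {α ι : Type*} [Countable ι] (W : α → Set X)
    (child : α → ι → α) (hopen : ∀ a i, IsOpen (W (child a i)))
    (hcover : ∀ a, W a ⊆ closure (⋃ i, W (child a i))) (a₀ : α) :
    ∀ᶠ x in residual X, x ∈ W a₀ →
      ∃ a : ℕ → α, a 0 = a₀ ∧ (∀ n, ∃ i, a (n + 1) = child (a n) i) ∧ ∀ n, x ∈ W (a n) := by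
  let node : List ι → α := List.foldr (fun i a => child a i) a₀
  filter_upwards [eventually_residual_mem_of_subset_closure (S := fun s => W (node s))
    (fun s => isOpen_iUnion (hopen (node s))) fun s => hcover (node s)] with x hx hx₀
  simp only [mem_iUnion] at hx
  choose next hnext using hx
  let step : {s // x ∈ W (node s)} → {s // x ∈ W (node s)} :=
    fun s => ⟨next s.1 s.2 :: s.1, hnext s.1 s.2⟩
  let path (n : ℕ) := step^[n] ⟨[], hx₀⟩
  refine ⟨fun n => node (path n).1, rfl, fun n => ⟨next _ (path n).2, ?_⟩, fun n => (path n).2⟩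
  simp only [path, Function.iterate_succ_apply']
  rfl

end Residual

section Metric

variable {Y : Type*} [PseudoMetricSpace Y]

theorem exists_closure_ball_subset_of_dist_le {S : Set Y} {y₀ : Y} (hS : S ∈ 𝓝 y₀) {δ : ℝ}
    (hδ : 0 < δ) :
    ∃ ρ > 0, closure (ball y₀ ρ) ⊆ S ∧ ∀ y ∈ ball y₀ ρ, ∀ y' ∈ ball y₀ ρ, dist y y' ≤ δ := by
  obtain ⟨ε, hε, hεS⟩ := nhds_basis_closedBall.mem_iff.mp hS
  refine ⟨min ε (δ / 2), lt_min hε (half_pos hδ), closure_ball_subset_closedBall.trans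
    ((closedBall_subset_closedBall (min_le_left _ _)).trans hεS), fun y hy y' hy' => ?_⟩
  rw [mem_ball] at hy hy'
  linarith [dist_triangle_right y y' y₀, min_le_right ε (δ / 2)]

theorem exists_mem_closure_tendsto_of_antitone [CompleteSpace Y] {V : ℕ → Set Y}
    (hV : Antitone V) {δ : ℕ → ℝ} (hδ : Tendsto δ atTop (𝓝 0))
    (hdist : ∀ n, ∀ y ∈ V n, ∀ y' ∈ V n, dist y y' ≤ δ n) {y : ℕ → Y} (hy : ∀ n, y n ∈ V n) :
    ∃ z, (∀ n, z ∈ closure (V n)) ∧ Tendsto y atTop (𝓝 z) := by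
  obtain ⟨z, hz⟩ := cauchySeq_tendsto_of_complete <| cauchySeq_of_le_tendsto_0 δ
    (fun n m N hn hm => hdist N _ (hV hn (hy n)) _ (hV hm (hy m))) hδ
  exact ⟨z, fun n => mem_closure_of_tendsto hz
    ((eventually_ge_atTop n).mono fun m hm => hV hm (hy m)), hz⟩

end Metric

section Approximation

variable {X Y : Type*} [TopologicalSpace X]

/-- The paper's `(f V)_r`. -/
def imageEnlargement (D : X → X → ℝ) (f : Y → X) (r : ℝ) (V : Set Y) : Set X :=
  {x | ∃ y ∈ V, D x (f y) < r}

def Approximates [TopologicalSpace Y] (D : X → X → ℝ) (f : Y → X) (r : ℝ) (W : Set X)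
    (V : Set Y) : Prop :=
  ∀ u : Set Y, IsOpen u → Dense u → W ⊆ closure (imageEnlargement D f r (V ∩ u))

variable {D : X → X → ℝ} {f : Y → X} {r : ℝ}

theorem approximates_univ [TopologicalSpace Y] (hD_self : ∀ x, D x x = 0) (hf : Continuous f)
    (hdense : DenseRange f) (hr : 0 < r) : Approximates D f r univ univ := by
  intro u _ hud
  have himage : f '' u ⊆ imageEnlargement D f r (univ ∩ u) := by
    rintro _ ⟨y, hy, rfl⟩
    exact ⟨y, ⟨trivial, hy⟩, by rw [hD_self]; exact hr⟩
  rw [((hdense.dense_image hf hud).mono himage).closure_eq]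

theorem imageEnlargement_subset_closure_inter [TopologicalSpace Y]
    (hD_symm : ∀ x y, D x y = D y x) (hf : Continuous f)
    (henl : ∀ V : Set X, IsOpen V → ∀ ε > (0 : ℝ), IsOpen {x : X | ∃ v ∈ V, D x v < ε})
    (hr : 0 < r) {V u : Set Y} (hV : IsOpen V) (hud : Dense u) :
    imageEnlargement D f r V ⊆ closure (imageEnlargement D f r (V ∩ u)) := by
  rintro x ⟨y, hyV, hxy⟩
  rw [_root_.mem_closure_iff]
  intro O hO hxO
  obtain ⟨s, hs, hsr⟩ := exists_between (max_lt hxy hr)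
  -- `f y` is `s`-close to `O`, an open condition, and `f y` is a limit of `f (V ∩ u)`.
  have hN : IsOpen {w | ∃ o ∈ O, D w o < s} := henl O hO s ((le_max_right _ _).trans_lt hs)
  have hfyN : f y ∈ {w | ∃ o ∈ O, D w o < s} :=
    ⟨x, hxO, by rw [hD_symm]; exact (le_max_left _ _).trans_lt hs⟩
  have hfy : f y ∈ closure (f '' (V ∩ u)) :=
    mem_closure_image hf.continuousAt (hud.open_subset_closure_inter hV hyV)
  obtain ⟨_, ⟨o, hoO, hos⟩, y₀, hy₀, rfl⟩ := _root_.mem_closure_iff.mp hfy _ hN hfyN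
  exact ⟨o, hoO, y₀, hy₀, by rw [hD_symm]; exact hos.trans hsr⟩

theorem Approximates.exists_refinement [PseudoMetricSpace Y]
    (himg : ∀ U : Set Y, IsOpen U → ∀ ε > (0 : ℝ), IsOpen (imageEnlargement D f ε U))
    (hr : 0 < r) {W O : Set X} {V u : Set Y} (h : Approximates D f r W V) (hW : IsOpen W)
    (hO : IsOpen O) (hV : IsOpen V) (hu : IsOpen u) (hud : Dense u) {δ : ℝ} (hδ : 0 < δ) :
    ∃ W' V', IsOpen W' ∧ IsOpen V' ∧ W' ⊆ O ∩ W ∧ closure V' ⊆ V ∩ u ∧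
      (∀ y ∈ V', ∀ y' ∈ V', dist y y' ≤ δ) ∧ W' ⊆ imageEnlargement D f r V' ∧
      ((O ∩ W).Nonempty → W'.Nonempty) := by
  by_cases hne : (O ∩ W).Nonempty
  · obtain ⟨x, hxOW⟩ := hne
    obtain ⟨x₀, hx₀, y₀, hy₀, hx₀y₀⟩ :=
      _root_.mem_closure_iff.mp (h u hu hud hxOW.2) _ (hO.inter hW) hxOW
    obtain ⟨ρ, hρ, hcl, hdist⟩ :=
      exists_closure_ball_subset_of_dist_le ((hV.inter hu).mem_nhds hy₀) hδ
    exact ⟨O ∩ W ∩ imageEnlargement D f r (ball y₀ ρ), ball y₀ ρ,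
      (hO.inter hW).inter (himg _ isOpen_ball r hr), isOpen_ball, inter_subset_left, hcl, hdist,
      inter_subset_right, fun _ => ⟨x₀, hx₀, y₀, mem_ball_self hρ, hx₀y₀⟩⟩
  · exact ⟨∅, ∅, isOpen_empty, isOpen_empty, empty_subset _, by simp, by simp, empty_subset _,
      fun h => absurd h hne⟩

variable (D f r) in
structure ApproxStage [TopologicalSpace Y] where
  W : Set X
  V : Set Y
  level : ℕ
  isOpen_W : IsOpen W
  isOpen_V : IsOpen V
  approximates : Approximates D f r W V

theorem ApproxStage.exists_child [SecondCountableTopology X] [PseudoMetricSpace Y]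
    (hD_symm : ∀ x y, D x y = D y x) (hf : Continuous f)
    (himg : ∀ U : Set Y, IsOpen U → ∀ ε > (0 : ℝ), IsOpen (imageEnlargement D f ε U))
    (henl : ∀ V : Set X, IsOpen V → ∀ ε > (0 : ℝ), IsOpen {x : X | ∃ v ∈ V, D x v < ε})
    (hr : 0 < r) {U : ℕ → Set Y} (hUo : ∀ n, IsOpen (U n)) (hUd : ∀ n, Dense (U n))
    (a : ApproxStage D f r) (b : countableBasis X) :
    ∃ c : ApproxStage D f r, c.level = a.level + 1 ∧ c.W ⊆ b ∩ a.W ∧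
      closure c.V ⊆ a.V ∩ U a.level ∧ (∀ y ∈ c.V, ∀ y' ∈ c.V, dist y y' ≤ (1 / 2) ^ a.level) ∧
      c.W ⊆ imageEnlargement D f r c.V ∧ (((b : Set X) ∩ a.W).Nonempty → c.W.Nonempty) := by
  obtain ⟨W', V', hW', hV', hsub, hcl, hdist, hWV', hne⟩ :=
    a.approximates.exists_refinement himg hr a.isOpen_W (isOpen_of_mem_countableBasis b.2)
      a.isOpen_V (hUo a.level) (hUd a.level) (δ := (1 / 2) ^ a.level) (by positivity)
  exact ⟨⟨W', V', a.level + 1, hW', hV', fun u _ hud =>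
    hWV'.trans (imageEnlargement_subset_closure_inter hD_symm hf henl hr hV' hud)⟩,
    rfl, hsub, hcl, hdist, hWV', hne⟩

theorem exists_mem_iInter_le_of_antitone [PseudoMetricSpace Y] [CompleteSpace Y]
    (hD_lsc : IsClosed {p : X × X | D p.1 p.2 ≤ r}) (hf : Continuous f) {V U : ℕ → Set Y}
    (hV : Antitone V) (hVU : ∀ n, closure (V n) ⊆ U n) {δ : ℕ → ℝ}
    (hδ : Tendsto δ atTop (𝓝 0)) (hdist : ∀ n, ∀ y ∈ V n, ∀ y' ∈ V n, dist y y' ≤ δ n) {x : X}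
    (hx : ∀ n, x ∈ imageEnlargement D f r (V n)) : ∃ y ∈ ⋂ n, U n, D x (f y) ≤ r := by
  choose y hyV hyD using hx
  obtain ⟨z, hz, hyz⟩ := exists_mem_closure_tendsto_of_antitone hV hδ hdist hyV
  exact ⟨z, mem_iInter.mpr fun n => hVU n (hz n), hD_lsc.mem_of_tendsto
    (tendsto_const_nhds.prodMk_nhds ((hf.tendsto z).comp hyz))
    (Eventually.of_forall fun n => (hyD n).le)⟩

theorem eventually_residual_exists_mem_iInter_le [SecondCountableTopology X] [MetricSpace Y]
    [CompleteSpace Y] (hD_self : ∀ x, D x x = 0) (hD_symm : ∀ x y, D x y = D y x)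
    (hD_lsc : IsClosed {p : X × X | D p.1 p.2 ≤ r}) (hf : Continuous f) (hdense : DenseRange f)
    (himg : ∀ U : Set Y, IsOpen U → ∀ ε > (0 : ℝ), IsOpen (imageEnlargement D f ε U))
    (henl : ∀ V : Set X, IsOpen V → ∀ ε > (0 : ℝ), IsOpen {x : X | ∃ v ∈ V, D x v < ε})
    {U : ℕ → Set Y} (hUo : ∀ n, IsOpen (U n)) (hUd : ∀ n, Dense (U n)) (hr : 0 < r) :
    ∀ᶠ x in residual X, ∃ y ∈ ⋂ n, U n, D x (f y) ≤ r := by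
  choose child hlevel hW hV hdist hWV hne using
    ApproxStage.exists_child hD_symm hf himg henl hr hUo hUd
  have hcover (a : ApproxStage D f r) : a.W ⊆ closure (⋃ b, (child a b).W) := by
    intro x hx
    rw [_root_.mem_closure_iff]
    intro O hO hxO
    obtain ⟨b, hb, hxb, hbO⟩ := (isBasis_countableBasis X).exists_subset_of_mem_open hxO hO
    obtain ⟨w, hw⟩ := hne a ⟨b, hb⟩ ⟨x, hxb, hx⟩
    exact ⟨w, hbO (hW a _ hw).1, mem_iUnion.mpr ⟨_, hw⟩⟩
  let root : ApproxStage D f r :=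
    ⟨univ, univ, 0, isOpen_univ, isOpen_univ, approximates_univ hD_self hf hdense hr⟩
  filter_upwards [eventually_residual_exists_branch ApproxStage.W child
    (fun a b => (child a b).isOpen_W) hcover root] with x hx
  obtain ⟨a, ha₀, hsucc, hxa⟩ := hx trivial
  choose i hi using hsucc
  have hlevel_eq : ∀ n, (a n).level = n := by
    intro n
    induction n with
    | zero => rw [ha₀]
    | succ n ih => rw [hi, hlevel, ih]
  have hVsucc (n : ℕ) : closure (a (n + 1)).V ⊆ (a n).V ∩ U n := by
    simpa only [hi, hlevel_eq] using hV (a n) (i n)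
  refine exists_mem_iInter_le_of_antitone hD_lsc hf (V := fun n => (a (n + 1)).V)
    (antitone_nat_of_succ_le fun n => subset_closure.trans ((hVsucc (n + 1)).trans
      inter_subset_left)) (fun n => (hVsucc n).trans inter_subset_right)
    (tendsto_pow_atTop_nhds_zero_of_lt_one (by norm_num) (by norm_num : (1 / 2 : ℝ) < 1))
    (fun n => by simpa only [hi, hlevel_eq] using hdist (a n) (i n)) fun n => ?_
  rw [hi]
  exact hWV _ _ (hi n ▸ hxa (n + 1))

end Approximation

theorem stmt_16_general {X Y : Type*} [TopologicalSpace X] [PolishSpace X]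
    [TopologicalSpace Y] [PolishSpace Y]
    (D : X → X → ℝ)
    (hD_eq : ∀ x y : X, D x y = 0 ↔ x = y)
    (hD_symm : ∀ x y : X, D x y = D y x)
    (hD_lsc : ∀ r : ℝ, IsClosed {p : X × X | D p.1 p.2 ≤ r})
    (f : Y → X) (hf : Continuous f) (hdense : DenseRange f)
    (himg : ∀ U : Set Y, IsOpen U → ∀ ε > (0 : ℝ),
      IsOpen {x : X | ∃ y ∈ U, D x (f y) < ε})
    (henl : ∀ V : Set X, IsOpen V → ∀ ε > (0 : ℝ),
      IsOpen {x : X | ∃ v ∈ V, D x v < ε})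
    (A : Set Y) (hA : A ∈ residual Y) :
    {x : X | ∀ ε > (0 : ℝ), ∃ y ∈ A, D x (f y) < ε} ∈ residual X := by
  let := upgradeIsCompletelyMetrizable Y
  obtain ⟨G, hGA, hGδ, hGd⟩ := mem_residual.mp hA
  obtain ⟨U, hUo, rfl⟩ := isGδ_iff_eq_iInter_nat.mp hGδ
  have hUd (n : ℕ) : Dense (U n) := hGd.mono (iInter_subset U n)
  have hclose (m : ℕ) : ∀ᶠ x in residual X, ∃ y ∈ ⋂ n, U n, D x (f y) ≤ 1 / ((m : ℝ) + 1) :=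
    eventually_residual_exists_mem_iInter_le (fun x => (hD_eq x x).mpr rfl) hD_symm (hD_lsc _)
      hf hdense himg henl hUo hUd (by positivity)
  filter_upwards [eventually_countable_forall.mpr hclose] with x hx ε hε
  obtain ⟨m, hm⟩ := exists_nat_one_div_lt hε
  obtain ⟨y, hyU, hyD⟩ := hx m
  exact ⟨y, hGA hyU, hyD.trans_lt hm⟩

/-- Abstract approximation criterion. Let `(X,τ_X,D)` be a Polish
topometric space, `Y` a Polish space and `f : Y → X` continuous with dense image such
that `(fU)_ε` is open for every open `U ⊆ Y` and `ε > 0`, and `(V)_ε` is open for every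
open `V ⊆ X` and `ε > 0`. Then the `D`-closure of the image of any comeagre subset of
`Y` is comeagre in `X`. -/
theorem stmt_16 {X Y : Type*} [TopologicalSpace X] [PolishSpace X]
    [TopologicalSpace Y] [PolishSpace Y]
    (D : X → X → ℝ)
    (hD_eq : ∀ x y : X, D x y = 0 ↔ x = y)
    (hD_symm : ∀ x y : X, D x y = D y x)
    (hD_tri : ∀ x y z : X, D x z ≤ D x y + D y z)
    (hD_ref : ∀ U : Set X, IsOpen U → ∀ x ∈ U, ∃ ε > (0 : ℝ), {y | D x y < ε} ⊆ U)
    (hD_lsc : ∀ r : ℝ, IsClosed {p : X × X | D p.1 p.2 ≤ r})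
    (f : Y → X) (hf : Continuous f) (hdense : DenseRange f)
    (himg : ∀ U : Set Y, IsOpen U → ∀ ε > (0 : ℝ),
      IsOpen {x : X | ∃ y ∈ U, D x (f y) < ε})
    (henl : ∀ V : Set X, IsOpen V → ∀ ε > (0 : ℝ),
      IsOpen {x : X | ∃ v ∈ V, D x v < ε})
    (A : Set Y) (hA : A ∈ residual Y) :
    {x : X | ∀ ε > (0 : ℝ), ∃ y ∈ A, D x (f y) < ε} ∈ residual X :=
  stmt_16_general D hD_eq hD_symm hD_lsc f hf hdense himg henl A hA
end

section
/- Let (G_i,τ_i,∂_i), i ∈ I, be an at most countable family of Polish topometric groups, and let G = ∏ G_i with product topology τ and metric ∂((g_i),(h_i)) = sup_i ∂_i(g_i,h_i) (assuming the metrics are uniformly bounded). Then (G,τ,∂) has ample generics if and only if every (G_i,τ_i,∂_i) has ample generics. -/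
open Pointwise

/-! A product tuple is `ε`-close to a conjugate of `ḡ` as soon as each coordinate tuple is
`ε/2`-close to a conjugate of `ḡ i`; the coordinate projections are continuous and open, so
pulling back the factors' comeagre sets and intersecting over the countably many factors gives a
comeagre set in the product. Conversely, write `Gⁿ ≅ G_{i₀}ⁿ × ∏_{i ≠ i₀} G_iⁿ`: by the easy half
of the Kuratowski–Ulam theorem, a comeagre subset of this product has a comeagre slice, and on that
slice the `i₀`-coordinate of the conjugating element witnesses the factor's condition, because the
sup metric dominates each coordinate distance (this is where uniform boundedness enters). -/

open Set Filter TopologicalSpace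

def Homeomorph.piComm {α β : Type*} (X : α → β → Type*) [∀ a b, TopologicalSpace (X a b)] :
    (∀ a b, X a b) ≃ₜ ∀ b a, X a b where
  toEquiv := Equiv.piComm X
  continuous_toFun := by dsimp [Equiv.piComm]; fun_prop
  continuous_invFun := by dsimp [Equiv.piComm]; fun_prop

section KuratowskiUlam

variable {Y Z : Type*} [TopologicalSpace Y] [TopologicalSpace Z] [SecondCountableTopology Y]

theorem eventually_residual_dense_slice {U : Set (Y × Z)} (hUo : IsOpen U) (hUd : Dense U) :
    ∀ᶠ z in residual Z, Dense {y | (y, z) ∈ U} := by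
  have hB := isBasis_countableBasis Y
  have hmeets : ∀ V ∈ countableBasis Y, ∀ᶠ z in residual Z, z ∈ Prod.snd '' (U ∩ V ×ˢ univ) := by
    intro V hV
    refine residual_of_dense_open (isOpenMap_snd _ (hUo.inter ((hB.isOpen hV).prod isOpen_univ))) ?_
    refine dense_iff_inter_open.2 fun O hO hOne => ?_
    obtain ⟨p, ⟨hpV, hpO⟩, hpU⟩ := hUd.inter_open_nonempty _ ((hB.isOpen hV).prod hO)
      ((nonempty_of_mem_countableBasis hV).prod hOne)
    exact ⟨p.2, hpO, p, ⟨hpU, hpV, trivial⟩, rfl⟩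
  filter_upwards [(eventually_countable_ball (countable_countableBasis Y)).2 hmeets] with z hz
  refine hB.dense_iff.2 fun V hV _ => ?_
  obtain ⟨⟨y, z⟩, ⟨hU, hyV, -⟩, rfl⟩ := hz V hV
  exact ⟨y, hyV, hU⟩

theorem eventually_residual_slice_mem_residual {S : Set (Y × Z)} (hS : S ∈ residual (Y × Z)) :
    ∀ᶠ z in residual Z, {y | (y, z) ∈ S} ∈ residual Y := by
  obtain ⟨T, hTo, hTd, hTc, hTS⟩ := mem_residual_iff.mp hS
  filter_upwards [(eventually_countable_ball hTc).2 fun U hU =>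
    eventually_residual_dense_slice (hTo U hU) (hTd U hU)] with z hz
  refine mem_of_superset ((countable_bInter_mem hTc).2 fun U hU =>
    residual_of_dense_open ((hTo U hU).preimage (Continuous.prodMk_left z)) (hz U hU)) ?_
  exact fun y hy => hTS (mem_sInter.2 fun U hU => mem_iInter₂.1 hy U hU)

theorem exists_slice_mem_residual [BaireSpace Z] [Nonempty Z] {S : Set (Y × Z)}
    (hS : S ∈ residual (Y × Z)) : ∃ z, {y | (y, z) ∈ S} ∈ residual Y :=
  (dense_of_mem_residual (eventually_residual_slice_mem_residual hS)).nonempty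

end KuratowskiUlam

noncomputable def supMetPi {ι : Type*} {X : ι → Type*} (D : ∀ i, X i → X i → ℝ)
    (x y : ∀ i, X i) : ℝ :=
  ⨆ i, D i (x i) (y i)

section SupMetric

variable {ι : Type*} {X : ι → Type*} (D : ∀ i, X i → X i → ℝ) {n : ℕ}

theorem supMetG_eval_le_supMetG_supMetPi (hbdd : ∃ C : ℝ, ∀ i, ∀ x y : X i, D i x y ≤ C)
    (F H : Fin n → ∀ i, X i) (i : ι) :
    supMetG (D i) (fun j => F j i) (fun j => H j i) ≤ supMetG (supMetPi D) F H := by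
  obtain ⟨C, hC⟩ := hbdd
  exact ciSup_mono (finite_range _).bddAbove fun j =>
    le_ciSup (f := fun i => D i (F j i) (H j i)) ⟨C, forall_mem_range.2 fun i => hC i _ _⟩ i

theorem supMetG_supMetPi_le {F H : Fin n → ∀ i, X i} {r : ℝ} (hr : 0 ≤ r)
    (h : ∀ i, supMetG (D i) (fun j => F j i) (fun j => H j i) ≤ r) :
    supMetG (supMetPi D) F H ≤ r :=
  Real.iSup_le (fun j => Real.iSup_le (fun i =>
    (le_ciSup (f := fun j => D i (F j i) (H j i)) (finite_range _).bddAbove j).trans (h i)) hr) hr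

end SupMetric

namespace AmpleGenerics

variable {ι : Type*} [Countable ι] {G : ι → Type*} [∀ i, Group (G i)] [∀ i, TopologicalSpace (G i)]
  {D : ∀ i, G i → G i → ℝ}

theorem pi (h : ∀ i, AmpleGenerics (D i)) : AmpleGenerics (supMetPi D) := by
  intro n ε hε
  choose g hg using fun i => h i n (ε / 2) (half_pos hε)
  refine ⟨fun j i => g i j, ?_⟩
  have hproj : ∀ i, Tendsto (fun (F : Fin n → ∀ i, G i) j => F j i) (residual _) (residual _) :=
    fun i => tendsto_residual_of_isOpenMap (by fun_prop)
      ((isOpenMap_eval i).comp (Homeomorph.piComm _).isOpenMap)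
  filter_upwards [eventually_countable_forall.2 fun i => hproj i (hg i)] with F hF
  choose k hk using hF
  exact ⟨k, (supMetG_supMetPi_le D (half_pos hε).le fun i => (hk i).le).trans_lt (half_lt_self hε)⟩

theorem of_pi [∀ i, PolishSpace (G i)] (hbdd : ∃ C : ℝ, ∀ i, ∀ g h : G i, D i g h ≤ C)
    (h : AmpleGenerics (supMetPi D)) (i₀ : ι) : AmpleGenerics (D i₀) := by
  classical
  intro n ε hε
  obtain ⟨g, hg⟩ := h n ε hε
  let e := (Homeomorph.piComm fun (_ : Fin n) i => G i).trans
    (Homeomorph.piSplitAt i₀ fun i => Fin n → G i)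
  obtain ⟨z, hz⟩ := exists_slice_mem_residual
    (tendsto_residual_of_isOpenMap e.symm.continuous e.symm.isOpenMap hg)
  refine ⟨fun j => g j i₀, mem_of_superset hz fun y ⟨k, hk⟩ => ⟨k i₀, ?_⟩⟩
  have hy : (fun j => e.symm (y, z) j i₀) = y := by
    ext j
    simp [e, Homeomorph.piComm, Function.swap]
  rw [← hy]
  exact (supMetG_eval_le_supMetG_supMetPi D hbdd _ _ i₀).trans_lt hk

end AmpleGenerics

theorem stmt_18_general {ι : Type*} [Countable ι] {G : ι → Type*}
    [∀ i, Group (G i)] [∀ i, TopologicalSpace (G i)]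
    [∀ i, PolishSpace (G i)]
    (D : ∀ i, G i → G i → ℝ)
    (hbdd : ∃ C : ℝ, ∀ i, ∀ g h : G i, D i g h ≤ C)
    (DP : (∀ i, G i) → (∀ i, G i) → ℝ)
    (hDP : ∀ g h : ∀ i, G i, DP g h = ⨆ i, D i (g i) (h i)) :
    AmpleGenerics DP ↔ ∀ i, AmpleGenerics (D i) := by
  obtain rfl : DP = supMetPi D := funext₂ hDP
  exact ⟨fun h => AmpleGenerics.of_pi hbdd h, AmpleGenerics.pi⟩

/-- A countable product of Polish topometric groups, with the product
topology and the supremum metric (the factor metrics being uniformly bounded), has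
ample generics iff every factor does. -/
theorem stmt_18 {ι : Type*} [Countable ι] {G : ι → Type*}
    [∀ i, Group (G i)] [∀ i, TopologicalSpace (G i)]
    [∀ i, IsTopologicalGroup (G i)] [∀ i, PolishSpace (G i)]
    (D : ∀ i, G i → G i → ℝ)
    (hD_eq : ∀ i, ∀ g h : G i, D i g h = 0 ↔ g = h)
    (hD_symm : ∀ i, ∀ g h : G i, D i g h = D i h g)
    (hD_tri : ∀ i, ∀ g h k : G i, D i g k ≤ D i g h + D i h k)
    (hD_bi : ∀ i, ∀ g h k : G i,
      D i (k * g) (k * h) = D i g h ∧ D i (g * k) (h * k) = D i g h)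
    (hD_ref : ∀ i, ∀ U : Set (G i), IsOpen U →
      ∀ g ∈ U, ∃ ε > (0 : ℝ), {h | D i g h < ε} ⊆ U)
    (hD_lsc : ∀ i, ∀ r : ℝ, IsClosed {p : G i × G i | D i p.1 p.2 ≤ r})
    (hbdd : ∃ C : ℝ, ∀ i, ∀ g h : G i, D i g h ≤ C)
    (DP : (∀ i, G i) → (∀ i, G i) → ℝ)
    (hDP : ∀ g h : ∀ i, G i, DP g h = ⨆ i, D i (g i) (h i)) :
    AmpleGenerics DP ↔ ∀ i, AmpleGenerics (D i) :=
  stmt_18_general D hbdd DP hDP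
end
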